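/- Let c be an even function on ℝ^d∖{0}, homogeneous of degree 0 and Lipschitz of order α ∈ (0,1] on the sphere, let ρ : ℝ^{d−1} → ℝ be rapidly decreasing, and let s ∈ (0,1). Then there exists C > 0 such that for all p ∈ ℝ with |p| ≥ 1, ∫_{|γ| ≤ |p|^s} |c(γ, p) − c(θ0)| |ρ(γ)| dγ ≤ C|p|^{−α(1−s)}. -/

import Mathlib

/-!
Normalised to the sphere, `(γ, p)` lies within `2|γ|/|p|` of `(0, p)/|p| = ±θ₀`, and on the ball
`|γ| ≤ |p|^s` this is at most `2|p|^(s-1)`. As `c` is even and homogeneous of degree `0`,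
`c(0, p) = c(θ₀)`, so the Hölder bound on the sphere gives `|c(γ, p) - c(θ₀)| ≤ L 2^α |p|^(-α(1-s))`
on the ball; the remaining factor `|ρ|` is dominated by an integrable function independent of `p`.
-/

open MeasureTheory Filter

noncomputable section

/-- The point `(γ, p) ∈ ℝ^{m+1}` with `γ ∈ ℝ^m` and last coordinate `p`. -/
def app {m : ℕ} (γ : EuclideanSpace ℝ (Fin m)) (p : ℝ) :
    EuclideanSpace ℝ (Fin (m + 1)) :=
  WithLp.toLp 2 (Fin.snoc (α := fun _ => ℝ) (WithLp.ofLp γ) p)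

/-- The direction `θ₀ = (0, …, 0, 1) ∈ ℝ^{m+1}`. -/
def theta0 (m : ℕ) : EuclideanSpace ℝ (Fin (m + 1)) := app 0 1

/-- `g` is homogeneous of degree `0` on `ℝ^n ∖ {0}`. -/
def Homog0 {n : ℕ} (g : EuclideanSpace ℝ (Fin n) → ℝ) : Prop :=
  ∀ t : ℝ, 0 < t → ∀ ξ : EuclideanSpace ℝ (Fin n), ξ ≠ 0 → g (t • ξ) = g ξ

/-- `g` is even. -/
def EvenFn {n : ℕ} (g : EuclideanSpace ℝ (Fin n) → ℝ) : Prop :=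
  ∀ ξ : EuclideanSpace ℝ (Fin n), g (-ξ) = g ξ

/-- `g` is Lipschitz of order `α` on the unit sphere. -/
def LipSphere {n : ℕ} (g : EuclideanSpace ℝ (Fin n) → ℝ) (α : ℝ) : Prop :=
  ∃ L > (0 : ℝ), ∀ x y : EuclideanSpace ℝ (Fin n), ‖x‖ = 1 → ‖y‖ = 1 →
    |g x - g y| ≤ L * ‖x - y‖ ^ α

/-- `ρ` is rapidly decreasing. -/
def RapidDecay {n : ℕ} (ρ : EuclideanSpace ℝ (Fin n) → ℝ) : Prop :=
  ∀ k : ℕ, ∃ C > (0 : ℝ), ∀ x : EuclideanSpace ℝ (Fin n),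
    |ρ x| ≤ C * (1 + ‖x‖) ^ (-(k : ℝ))

section App

variable {m : ℕ}

lemma app_sub (γ γ' : EuclideanSpace ℝ (Fin m)) (p p' : ℝ) :
    app γ p - app γ' p' = app (γ - γ') (p - p') := by
  ext i
  refine Fin.lastCases ?_ (fun j => ?_) i <;>
    simp [app, PiLp.sub_apply, Fin.snoc_castSucc, Fin.snoc_last]

lemma neg_app (γ : EuclideanSpace ℝ (Fin m)) (p : ℝ) : -app γ p = app (-γ) (-p) := by
  ext i
  refine Fin.lastCases ?_ (fun j => ?_) i <;>
    simp [app, PiLp.neg_apply, Fin.snoc_castSucc, Fin.snoc_last]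

lemma smul_app (t : ℝ) (γ : EuclideanSpace ℝ (Fin m)) (p : ℝ) :
    t • app γ p = app (t • γ) (t * p) := by
  ext i
  refine Fin.lastCases ?_ (fun j => ?_) i <;>
    simp [app, PiLp.smul_apply, Fin.snoc_castSucc, Fin.snoc_last]

lemma norm_app_sq (γ : EuclideanSpace ℝ (Fin m)) (p : ℝ) :
    ‖app γ p‖ ^ 2 = ‖γ‖ ^ 2 + p ^ 2 := by
  rw [EuclideanSpace.norm_eq, EuclideanSpace.norm_eq, Real.sq_sqrt (by positivity),
    Real.sq_sqrt (by positivity), Fin.sum_univ_castSucc]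
  simp [app, Fin.snoc_castSucc, Fin.snoc_last, sq_abs]

lemma norm_app_zero (γ : EuclideanSpace ℝ (Fin m)) : ‖app γ 0‖ = ‖γ‖ :=
  (sq_eq_sq₀ (norm_nonneg _) (norm_nonneg _)).1 (by simp [norm_app_sq])

lemma norm_zero_app (p : ℝ) : ‖app (0 : EuclideanSpace ℝ (Fin m)) p‖ = |p| :=
  (sq_eq_sq₀ (norm_nonneg _) (abs_nonneg _)).1 (by simp [norm_app_sq])

lemma abs_le_norm_app (γ : EuclideanSpace ℝ (Fin m)) (p : ℝ) : |p| ≤ ‖app γ p‖ :=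
  (sq_le_sq₀ (abs_nonneg p) (norm_nonneg _)).1 <| by
    rw [sq_abs, norm_app_sq]; exact le_add_of_nonneg_left (sq_nonneg _)

lemma norm_theta0 : ‖theta0 m‖ = 1 := by
  simp [theta0, norm_zero_app]

end App

lemma norm_inv_norm_smul_sub_le {E : Type*} [NormedAddCommGroup E] [NormedSpace ℝ E]
    {x y : E} (hx : x ≠ 0) (hy : y ≠ 0) :
    ‖‖x‖⁻¹ • x - ‖y‖⁻¹ • y‖ ≤ 2 * ‖x - y‖ / ‖x‖ := by
  have hx' : 0 < ‖x‖ := norm_pos_iff.2 hx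
  have hy' : 0 < ‖y‖ := norm_pos_iff.2 hy
  have hsplit : ‖x‖⁻¹ • x - ‖y‖⁻¹ • y = ‖x‖⁻¹ • ((x - y) + (‖y‖ - ‖x‖) • ‖y‖⁻¹ • y) := by
    have hcoef : ‖x‖⁻¹ * (‖y‖ - ‖x‖) * ‖y‖⁻¹ = ‖x‖⁻¹ - ‖y‖⁻¹ := by field_simp
    rw [smul_add, smul_smul, smul_smul, hcoef]
    module
  rw [hsplit, norm_smul, norm_inv, norm_norm, inv_mul_eq_div]
  gcongr
  calc ‖x - y + (‖y‖ - ‖x‖) • ‖y‖⁻¹ • y‖ ≤ ‖x - y‖ + |‖y‖ - ‖x‖| * 1 := by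
        grw [norm_add_le, norm_smul, norm_smul, norm_inv, norm_norm, inv_mul_cancel₀ hy'.ne',
          Real.norm_eq_abs]
    _ ≤ 2 * ‖x - y‖ := by
        rw [abs_sub_comm, mul_one]; linarith [abs_norm_sub_norm_le x y]

theorem Homog0.abs_sub_le {n : ℕ} {g : EuclideanSpace ℝ (Fin n) → ℝ} {L α : ℝ}
    (hg : Homog0 g) (hlip : ∀ x y : EuclideanSpace ℝ (Fin n), ‖x‖ = 1 → ‖y‖ = 1 →
      |g x - g y| ≤ L * ‖x - y‖ ^ α) (hL : 0 ≤ L) (hα : 0 ≤ α)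
    {x y : EuclideanSpace ℝ (Fin n)} (hx : x ≠ 0) (hy : y ≠ 0) :
    |g x - g y| ≤ L * (2 * ‖x - y‖ / ‖x‖) ^ α :=
  calc |g x - g y| = |g (‖x‖⁻¹ • x) - g (‖y‖⁻¹ • y)| := by
        rw [hg _ (inv_pos.2 (norm_pos_iff.2 hx)) x hx, hg _ (inv_pos.2 (norm_pos_iff.2 hy)) y hy]
    _ ≤ L * ‖‖x‖⁻¹ • x - ‖y‖⁻¹ • y‖ ^ α :=
        hlip _ _ (norm_smul_inv_norm hx) (norm_smul_inv_norm hy)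
    _ ≤ L * (2 * ‖x - y‖ / ‖x‖) ^ α := by
        gcongr; exact norm_inv_norm_smul_sub_le hx hy

lemma RapidDecay.exists_integrable_abs_le {n : ℕ} {ρ : EuclideanSpace ℝ (Fin n) → ℝ}
    (hρ : RapidDecay ρ) : ∃ g : EuclideanSpace ℝ (Fin n) → ℝ, Integrable g ∧ ∀ x, |ρ x| ≤ g x := by
  obtain ⟨C, -, hC⟩ := hρ (n + 1)
  refine ⟨fun x => C * (1 + ‖x‖) ^ (-((n + 1 : ℕ) : ℝ)), ?_, hC⟩
  refine (integrable_one_add_norm ?_).const_mul C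
  simp

lemma setIntegral_le_mul_integral {α : Type*} [MeasurableSpace α] {μ : Measure α} {S : Set α}
    (hS : MeasurableSet S) {F g : α → ℝ} {K : ℝ} (hK : 0 ≤ K) (hg : Integrable g μ)
    (hg0 : 0 ≤ g) (hF : ∀ x ∈ S, 0 ≤ F x ∧ F x ≤ K * g x) :
    ∫ x in S, F x ∂μ ≤ K * ∫ x, g x ∂μ :=
  calc ∫ x in S, F x ∂μ ≤ ∫ x in S, K * g x ∂μ :=
        integral_mono_of_nonneg ((ae_restrict_iff' hS).2 (ae_of_all _ fun x hx => (hF x hx).1))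
          (hg.const_mul K).integrableOn
          ((ae_restrict_iff' hS).2 (ae_of_all _ fun x hx => (hF x hx).2))
    _ ≤ ∫ x, K * g x ∂μ :=
        setIntegral_le_integral (hg.const_mul K) (ae_of_all _ fun x => mul_nonneg hK (hg0 x))
    _ = K * ∫ x, g x ∂μ := integral_const_mul K _

lemma two_mul_div_rpow_le {a b s α : ℝ} (ha : 0 < a) (hb : 0 ≤ b) (hba : b ≤ a ^ s)
    (hα : 0 ≤ α) : (2 * b / a) ^ α ≤ 2 ^ α * a ^ (-α * (1 - s)) :=
  calc (2 * b / a) ^ α ≤ (2 * a ^ (s - 1)) ^ α := by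
        rw [Real.rpow_sub_one ha.ne', mul_div_assoc]; gcongr
    _ = 2 ^ α * a ^ (-α * (1 - s)) := by
        rw [Real.mul_rpow zero_le_two (by positivity), ← Real.rpow_mul ha.le]; ring_nf

section Symbol

variable {m : ℕ} {c : EuclideanSpace ℝ (Fin (m + 1)) → ℝ}

lemma apply_app_zero_eq_apply_theta0 (hceven : EvenFn c) (hchom : Homog0 c) {p : ℝ}
    (hp : p ≠ 0) : c (app 0 p) = c (theta0 m) := by
  have hθ : theta0 m ≠ 0 := norm_ne_zero_iff.1 (by simp [norm_theta0])
  rcases hp.lt_or_gt with hneg | hpos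
  · calc c (app 0 p) = c ((-p) • -theta0 m) := by simp [theta0, neg_app, smul_app]
      _ = c (theta0 m) := by rw [hchom _ (neg_pos.2 hneg) _ (neg_ne_zero.2 hθ), hceven]
  · calc c (app 0 p) = c (p • theta0 m) := by simp [theta0, smul_app]
      _ = c (theta0 m) := hchom _ hpos _ hθ

lemma abs_apply_app_sub_apply_theta0_le {L α : ℝ} (hceven : EvenFn c) (hchom : Homog0 c)
    (hlip : ∀ x y : EuclideanSpace ℝ (Fin (m + 1)), ‖x‖ = 1 → ‖y‖ = 1 →
      |c x - c y| ≤ L * ‖x - y‖ ^ α) (hL : 0 ≤ L) (hα : 0 ≤ α)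
    (γ : EuclideanSpace ℝ (Fin m)) {p : ℝ} (hp : p ≠ 0) :
    |c (app γ p) - c (theta0 m)| ≤ L * (2 * ‖γ‖ / |p|) ^ α := by
  have h0p : app (0 : EuclideanSpace ℝ (Fin m)) p ≠ 0 :=
    norm_ne_zero_iff.1 (by simp [norm_zero_app, hp])
  have hγp : app γ p ≠ 0 :=
    norm_pos_iff.1 ((abs_pos.2 hp).trans_le (abs_le_norm_app γ p))
  rw [← apply_app_zero_eq_apply_theta0 hceven hchom hp, abs_sub_comm]
  simpa [app_sub, norm_app_zero, norm_zero_app] using hchom.abs_sub_le hlip hL hα h0p hγp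

end Symbol

theorem statement15_general (m : ℕ) (α : ℝ) (hα : 0 < α)
    (c : EuclideanSpace ℝ (Fin (m + 1)) → ℝ)
    (hceven : EvenFn c) (hchom : Homog0 c) (hclip : LipSphere c α)
    (ρ : EuclideanSpace ℝ (Fin m) → ℝ)
    (hρ : RapidDecay ρ)
    (s : ℝ) :
    ∃ C > (0 : ℝ), ∀ p : ℝ, 1 ≤ |p| →
      (∫ γ in {γ : EuclideanSpace ℝ (Fin m) | ‖γ‖ ≤ |p| ^ s},
          |c (app γ p) - c (theta0 m)| * |ρ γ|) ≤ C * |p| ^ (-α * (1 - s)) := by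
  obtain ⟨L, hL, hlip⟩ := hclip
  obtain ⟨g, hg, hρg⟩ := hρ.exists_integrable_abs_le
  have hg0 : 0 ≤ g := fun γ => (abs_nonneg _).trans (hρg γ)
  set I := ∫ γ, g γ
  have hI : 0 ≤ I := integral_nonneg hg0
  refine ⟨L * 2 ^ α * (I + 1), mul_pos (by positivity) (by linarith), fun p hp => ?_⟩
  have hp0 : 0 < |p| := by linarith
  set K := L * 2 ^ α * |p| ^ (-α * (1 - s))
  have hK : 0 ≤ K := by positivity
  have hbound : ∀ γ ∈ {γ : EuclideanSpace ℝ (Fin m) | ‖γ‖ ≤ |p| ^ s},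
      0 ≤ |c (app γ p) - c (theta0 m)| * |ρ γ| ∧
        |c (app γ p) - c (theta0 m)| * |ρ γ| ≤ K * g γ := fun γ hγ =>
    ⟨by positivity, calc
      _ ≤ L * (2 * ‖γ‖ / |p|) ^ α * g γ :=
          mul_le_mul (abs_apply_app_sub_apply_theta0_le hceven hchom hlip hL.le hα.le γ
            (abs_pos.1 hp0)) (hρg γ) (abs_nonneg _) (by positivity)
      _ ≤ L * (2 ^ α * |p| ^ (-α * (1 - s))) * g γ := by
          gcongr; exacts [hg0 γ, two_mul_div_rpow_le hp0 (norm_nonneg γ) hγ hα.le]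
      _ = K * g γ := by ring⟩
  calc _ ≤ K * I :=
        setIntegral_le_mul_integral (measurableSet_le measurable_norm measurable_const) hK hg
          hg0 hbound
    _ ≤ K * (I + 1) := mul_le_mul_of_nonneg_left (by linarith) hK
    _ = L * 2 ^ α * (I + 1) * |p| ^ (-α * (1 - s)) := by ring

theorem statement15 (m : ℕ) (hm : 1 ≤ m) (α : ℝ) (hα : 0 < α) (hα1 : α ≤ 1)
    (c : EuclideanSpace ℝ (Fin (m + 1)) → ℝ)
    (hceven : EvenFn c) (hchom : Homog0 c) (hclip : LipSphere c α)
    (ρ : EuclideanSpace ℝ (Fin m) → ℝ) (hρmeas : Measurable ρ)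
    (hρ : RapidDecay ρ)
    (s : ℝ) (hs : s ∈ Set.Ioo (0 : ℝ) 1) :
    ∃ C > (0 : ℝ), ∀ p : ℝ, 1 ≤ |p| →
      (∫ γ in {γ : EuclideanSpace ℝ (Fin m) | ‖γ‖ ≤ |p| ^ s},
          |c (app γ p) - c (theta0 m)| * |ρ γ|) ≤ C * |p| ^ (-α * (1 - s)) :=
  statement15_general m α hα c hceven hchom hclip ρ hρ s
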